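/- Let H, H', K, K' be finite-dimensional complex inner product spaces, d : H → K and d' : H' → K' linear maps, and suppose there exist linear isometries J⁰ : H' → H (‖J⁰x‖ = ‖x‖ for all x) and J¹ : K' → K (‖J¹y‖ = ‖y‖ for all y) with d ∘ J⁰ = J¹ ∘ d'. Let λ_1 ≤ … ≤ λ_n and λ'_1 ≤ … ≤ λ'_{n'} be the eigenvalues of d*d and d'*d' in nondecreasing order with multiplicity, and set r = n − n' ≥ 0. Then λ_k ≤ λ'_k for all 1 ≤ k ≤ n', and λ'_k ≤ λ_{k+r} for all 1 ≤ k ≤ n'. -/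

import Mathlib

/-!
By Courant–Fischer, the eigenvalue `λ_k` of `d*d` (counted from `0` in increasing order) is the
least `c` for which some `(k+1)`-dimensional subspace satisfies `‖d x‖² ≤ c ‖x‖²`. Since
`‖d (J⁰ x)‖ = ‖J¹ (d' x)‖ = ‖d' x‖` and `J⁰` is isometric, `J⁰` maps such a subspace for `d'` to
one for `d` of the same dimension, giving `λ_k ≤ λ'_k`; conversely the preimage under `J⁰` of a
`(k+r+1)`-dimensional subspace for `d` has dimension at least `k+1`, giving `λ'_k ≤ λ_{k+r}`.
-/

/-- The eigenvalues (with algebraic multiplicity) of an endomorphism of a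
finite-dimensional complex vector space whose spectrum is real, listed in
nondecreasing order: the real parts of the roots of the characteristic
polynomial, sorted; `opEig T k` is the `(k+1)`-st smallest (0-based index). -/
noncomputable def opEig {H : Type} [NormedAddCommGroup H] [InnerProductSpace ℂ H]
    [FiniteDimensional ℂ H] (T : H →ₗ[ℂ] H) (k : ℕ) : ℝ :=
  (((LinearMap.charpoly T).roots.map Complex.re).sort (· ≤ ·)).getD k 0

open Module Submodule RCLike

section Rayleigh

variable {𝕜 E ι : Type*} [RCLike 𝕜] [NormedAddCommGroup E] [InnerProductSpace 𝕜 E] [Fintype ι]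
  {T : E →ₗ[𝕜] E} (b : OrthonormalBasis ι 𝕜 E) {μ : ι → ℝ}

theorem OrthonormalBasis.re_inner_apply_self_eq_sum (hb : ∀ i, T (b i) = (μ i : 𝕜) • b i)
    (x : E) : re (inner 𝕜 x (T x)) = ∑ i, μ i * ‖inner 𝕜 (b i) x‖ ^ 2 := by
  have hTx : T x = ∑ i, (μ i * inner 𝕜 (b i) x) • b i := by
    conv_lhs => rw [← b.sum_repr' x]
    simp only [map_sum, map_smul, hb, smul_smul, mul_comm]
  rw [hTx, inner_sum, map_sum]
  refine Finset.sum_congr rfl fun i _ => ?_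
  rw [inner_smul_right, ← inner_conj_symm x, mul_assoc, RCLike.mul_conj]
  norm_cast

theorem OrthonormalBasis.inner_eq_zero_of_mem_span_image {s : Set ι} {x : E}
    (hx : x ∈ span 𝕜 (b '' s)) {i : ι} (hi : i ∉ s) : inner 𝕜 (b i) x = 0 := by
  have : span 𝕜 (b '' s) ≤ LinearMap.ker (innerₛₗ 𝕜 (b i)) := by
    rw [span_le]
    rintro _ ⟨j, hj, rfl⟩
    simp [b.orthonormal.inner_eq_zero (ne_of_mem_of_not_mem hj hi).symm]
  exact this hx

theorem OrthonormalBasis.re_inner_apply_self_le_of_mem_span_image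
    (hb : ∀ i, T (b i) = (μ i : 𝕜) • b i) {s : Set ι} {c : ℝ} (hc : ∀ i ∈ s, μ i ≤ c)
    {x : E} (hx : x ∈ span 𝕜 (b '' s)) : re (inner 𝕜 x (T x)) ≤ c * ‖x‖ ^ 2 := by
  rw [b.re_inner_apply_self_eq_sum hb, ← b.sum_sq_norm_inner_right, Finset.mul_sum]
  refine Finset.sum_le_sum fun i _ => ?_
  by_cases hi : i ∈ s
  · exact mul_le_mul_of_nonneg_right (hc i hi) (sq_nonneg _)
  · simp [b.inner_eq_zero_of_mem_span_image hx hi]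

theorem OrthonormalBasis.le_re_inner_apply_self_of_mem_span_image
    (hb : ∀ i, T (b i) = (μ i : 𝕜) • b i) {s : Set ι} {c : ℝ} (hc : ∀ i ∈ s, c ≤ μ i)
    {x : E} (hx : x ∈ span 𝕜 (b '' s)) : c * ‖x‖ ^ 2 ≤ re (inner 𝕜 x (T x)) := by
  rw [b.re_inner_apply_self_eq_sum hb, ← b.sum_sq_norm_inner_right, Finset.mul_sum]
  refine Finset.sum_le_sum fun i _ => ?_
  by_cases hi : i ∈ s
  · exact mul_le_mul_of_nonneg_right (hc i hi) (sq_nonneg _)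
  · simp [b.inner_eq_zero_of_mem_span_image hx hi]

theorem OrthonormalBasis.finrank_span_image (s : Finset ι) :
    finrank 𝕜 (span 𝕜 (b '' s)) = s.card := by
  rw [Set.image_eq_range, finrank_span_eq_card (b := fun i : (s : Set ι) ↦ b i)
    (b.orthonormal.linearIndependent.comp _ Subtype.val_injective)]
  simp

end Rayleigh

section Dimension

variable {K V V' : Type*} [Field K] [AddCommGroup V] [Module K V] [FiniteDimensional K V]
  [AddCommGroup V'] [Module K V'] [FiniteDimensional K V']

theorem Submodule.exists_mem_inf_ne_zero_of_finrank_lt {U W : Submodule K V}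
    (h : finrank K V < finrank K U + finrank K W) : ∃ x ∈ U ⊓ W, x ≠ 0 := by
  have hsum := Submodule.finrank_sup_add_finrank_inf_eq U W
  have hsup : finrank K ↥(U ⊔ W) ≤ finrank K V := Submodule.finrank_le _
  exact Submodule.exists_mem_ne_zero_of_ne_bot fun hbot => by
    rw [hbot, finrank_bot] at hsum
    omega

theorem Submodule.finrank_add_le_finrank_comap_add (f : V' →ₗ[K] V) (U : Submodule K V) :
    finrank K U + finrank K V' ≤ finrank K (U.comap f) + finrank K V := by
  have hker : U.comap f = LinearMap.ker (U.mkQ ∘ₗ f) := by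
    rw [LinearMap.ker_comp, ker_mkQ]
  have hrange := LinearMap.finrank_range_add_finrank_ker (U.mkQ ∘ₗ f)
  have hquot := U.finrank_quotient_add_finrank
  have hle : finrank K (LinearMap.range (U.mkQ ∘ₗ f)) ≤ finrank K (V ⧸ U) :=
    Submodule.finrank_le _
  rw [hker]
  omega

end Dimension

section MinMax

variable {H : Type} [NormedAddCommGroup H] [InnerProductSpace ℂ H] [FiniteDimensional ℂ H]
  {T : H →ₗ[ℂ] H}

theorem LinearMap.IsSymmetric.opEig_eq_eigenvalues_rev (hT : T.IsSymmetric) {k : ℕ}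
    (hk : k < finrank ℂ H) : opEig T k = hT.eigenvalues rfl (Fin.rev ⟨k, hk⟩) := by
  have hsort : (T.charpoly.roots.map Complex.re).sort (· ≤ ·)
      = (List.ofFn (hT.eigenvalues rfl)).reverse := by
    rw [← hT.sort_roots_charpoly_eq_eigenvalues rfl]
    refine List.Perm.eq_reverse_of_sortedLE_of_sortedGE ?_ ?_ ?_
    · exact Multiset.coe_eq_coe.mp (by rw [Multiset.sort_eq, Multiset.sort_eq]; rfl)
    · exact List.sortedLE_iff_pairwise.mpr (Multiset.pairwise_sort _ _)
    · exact List.sortedGE_iff_pairwise.mpr (Multiset.pairwise_sort _ _)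
  rw [opEig, hsort, List.getD_eq_getElem _ _ (by simpa using hk), List.getElem_reverse,
    List.getElem_ofFn]
  congr 1
  ext
  simp only [List.length_ofFn, Fin.val_rev]
  omega

theorem LinearMap.IsSymmetric.opEig_le_of_lt_finrank (hT : T.IsSymmetric) {U : Submodule ℂ H}
    {k : ℕ} (hk : k < finrank ℂ U) {c : ℝ} (hc : ∀ x ∈ U, re (inner ℂ x (T x)) ≤ c * ‖x‖ ^ 2) :
    opEig T k ≤ c := by
  have hkH : k < finrank ℂ H := hk.trans_le U.finrank_le
  set b := hT.eigenvectorBasis rfl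
  set j : Fin (finrank ℂ H) := ⟨k, hkH⟩
  let W := span ℂ (b '' (Finset.Iic j.rev : Finset _))
  have hW : finrank ℂ W = finrank ℂ H - k := by
    rw [b.finrank_span_image, Fin.card_Iic, Fin.val_rev, Fin.val_mk]
    omega
  obtain ⟨x, ⟨hxU, hxW⟩, hx0⟩ := exists_mem_inf_ne_zero_of_finrank_lt (U := U) (W := W) (by omega)
  have hlow := b.le_re_inner_apply_self_of_mem_span_image (hT.apply_eigenvectorBasis rfl)
    (fun i hi => hT.eigenvalues_antitone rfl (Finset.mem_Iic.mp hi)) hxW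
  rw [hT.opEig_eq_eigenvalues_rev hkH]
  exact le_of_mul_le_mul_right (hlow.trans (hc x hxU)) (by positivity)

theorem LinearMap.IsSymmetric.exists_finrank_eq_forall_re_inner_le_opEig (hT : T.IsSymmetric)
    {k : ℕ} (hk : k < finrank ℂ H) : ∃ U : Submodule ℂ H, finrank ℂ U = k + 1 ∧
      ∀ x ∈ U, re (inner ℂ x (T x)) ≤ opEig T k * ‖x‖ ^ 2 := by
  set b := hT.eigenvectorBasis rfl
  set j : Fin (finrank ℂ H) := ⟨k, hk⟩
  refine ⟨span ℂ (b '' (Finset.Ici j.rev : Finset _)), ?_, fun x hx => ?_⟩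
  · rw [b.finrank_span_image, Fin.card_Ici, Fin.val_rev, Fin.val_mk]
    omega
  · rw [hT.opEig_eq_eigenvalues_rev hk]
    exact b.re_inner_apply_self_le_of_mem_span_image (hT.apply_eigenvectorBasis rfl)
      (fun i hi => hT.eigenvalues_antitone rfl (Finset.mem_Ici.mp hi)) hx

end MinMax

theorem LinearMap.re_inner_adjoint_comp_self_apply {𝕜 E F : Type*} [RCLike 𝕜]
    [NormedAddCommGroup E] [InnerProductSpace 𝕜 E] [FiniteDimensional 𝕜 E]
    [NormedAddCommGroup F] [InnerProductSpace 𝕜 F] [FiniteDimensional 𝕜 F]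
    (d : E →ₗ[𝕜] F) (x : E) : re (inner 𝕜 x ((adjoint d ∘ₗ d) x)) = ‖d x‖ ^ 2 := by
  rw [comp_apply, adjoint_inner_right, inner_self_eq_norm_sq]

section Intertwining

variable {H K H' K' : Type}
  [NormedAddCommGroup H] [InnerProductSpace ℂ H] [FiniteDimensional ℂ H]
  [NormedAddCommGroup K] [InnerProductSpace ℂ K] [FiniteDimensional ℂ K]
  [NormedAddCommGroup H'] [InnerProductSpace ℂ H'] [FiniteDimensional ℂ H']
  [NormedAddCommGroup K'] [InnerProductSpace ℂ K'] [FiniteDimensional ℂ K']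
  {d : H →ₗ[ℂ] K} {d' : H' →ₗ[ℂ] K'} (J : H' →ₗᵢ[ℂ] H)

open LinearMap

theorem opEig_adjoint_comp_self_le_of_isometry (hdJ : ∀ x, ‖d (J x)‖ = ‖d' x‖) {k : ℕ}
    (hk : k < finrank ℂ H') : opEig (adjoint d ∘ₗ d) k ≤ opEig (adjoint d' ∘ₗ d') k := by
  obtain ⟨U', hU', hU'le⟩ :=
    (isSymmetric_adjoint_comp_self d').exists_finrank_eq_forall_re_inner_le_opEig hk
  have hU : finrank ℂ (U'.map J.toLinearMap) = k + 1 := by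
    rw [← hU', ← LinearEquiv.finrank_eq (equivMapOfInjective _ J.injective U')]
  refine (isSymmetric_adjoint_comp_self d).opEig_le_of_lt_finrank
    (U := U'.map J.toLinearMap) (by omega) ?_
  rintro _ ⟨y, hy, rfl⟩
  simpa only [re_inner_adjoint_comp_self_apply, LinearIsometry.coe_toLinearMap, hdJ,
    J.norm_map] using hU'le y hy

theorem opEig_adjoint_comp_self_le_shift_of_isometry (hdJ : ∀ x, ‖d (J x)‖ = ‖d' x‖) {k : ℕ}
    (hk : k < finrank ℂ H') :
    opEig (adjoint d' ∘ₗ d') k ≤ opEig (adjoint d ∘ₗ d) (k + (finrank ℂ H - finrank ℂ H')) := by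
  have hH := J.toLinearMap.finrank_le_finrank_of_injective J.injective
  obtain ⟨U, hU, hUle⟩ :=
    (isSymmetric_adjoint_comp_self d).exists_finrank_eq_forall_re_inner_le_opEig
      (k := k + (finrank ℂ H - finrank ℂ H')) (by omega)
  have hcomap := finrank_add_le_finrank_comap_add J.toLinearMap U
  refine (isSymmetric_adjoint_comp_self d').opEig_le_of_lt_finrank (U := U.comap J.toLinearMap)
    (by omega) fun x hx => ?_
  simpa only [re_inner_adjoint_comp_self_apply, LinearIsometry.coe_toLinearMap, hdJ,
    J.norm_map] using hUle _ hx

end Intertwining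

/-- if `d ∘ J⁰ = J¹ ∘ d'` with `J⁰, J¹` linear isometries, and
`r = dim H − dim H' ≥ 0`, then the ordered eigenvalues of `d*d` and `d'*d'`
satisfy `λ_k ≤ λ'_k` and `λ'_k ≤ λ_{k+r}` for all `1 ≤ k ≤ dim H'`. -/
theorem stmt6 {H K H' K' : Type}
    [NormedAddCommGroup H] [InnerProductSpace ℂ H] [FiniteDimensional ℂ H]
    [NormedAddCommGroup K] [InnerProductSpace ℂ K] [FiniteDimensional ℂ K]
    [NormedAddCommGroup H'] [InnerProductSpace ℂ H'] [FiniteDimensional ℂ H']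
    [NormedAddCommGroup K'] [InnerProductSpace ℂ K'] [FiniteDimensional ℂ K']
    (d : H →ₗ[ℂ] K) (d' : H' →ₗ[ℂ] K')
    (J0 : H' →ₗ[ℂ] H) (J1 : K' →ₗ[ℂ] K)
    (hJ0 : ∀ x : H', ‖J0 x‖ = ‖x‖)
    (hJ1 : ∀ y : K', ‖J1 y‖ = ‖y‖)
    (hcomm : d ∘ₗ J0 = J1 ∘ₗ d') :
    Module.finrank ℂ H' ≤ Module.finrank ℂ H ∧
      (∀ k : ℕ, 1 ≤ k → k ≤ Module.finrank ℂ H' →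
        opEig (LinearMap.adjoint d ∘ₗ d) (k - 1)
          ≤ opEig (LinearMap.adjoint d' ∘ₗ d') (k - 1)) ∧
      (∀ k : ℕ, 1 ≤ k → k ≤ Module.finrank ℂ H' →
        opEig (LinearMap.adjoint d' ∘ₗ d') (k - 1)
          ≤ opEig (LinearMap.adjoint d ∘ₗ d)
              (k - 1 + (Module.finrank ℂ H - Module.finrank ℂ H'))) := by
  let J : H' →ₗᵢ[ℂ] H := { J0 with norm_map' := hJ0 }
  have hdJ (x : H') : ‖d (J x)‖ = ‖d' x‖ := by
    rw [← hJ1, ← LinearMap.comp_apply, ← hcomm]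
    rfl
  refine ⟨J.toLinearMap.finrank_le_finrank_of_injective J.injective,
    fun k hk1 hk2 => ?_, fun k hk1 hk2 => ?_⟩
  · exact opEig_adjoint_comp_self_le_of_isometry J hdJ (by omega)
  · exact opEig_adjoint_comp_self_le_shift_of_isometry J hdJ (by omega)
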